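/- arXiv:1902.00107 — 2 statements merged into one kernel-verified Lean document; each statement's English description precedes it below -/
import Mathlib

section
/- Let Z be hypergeometric with parameters n, m, r and let Δ := max{2Z − r + s − m, 0} where s ≤ m ≤ n/8 are natural numbers and 1 ≤ r ≤ n. Then for every positive integer z, P(Δ = z) ≤ (1/2)^{z/2}. -/
/-! On the event `Δ = z ≥ 1` the hypergeometric variable takes the single value
`k = (z + r + m - s) / 2`, and `s ≤ m` gives `r ≤ 2k` and `z ≤ 2k`. Writing
`P(Z = k) = C(r,k) · m^(k) (n-m)^(r-k) / n^(r)` with falling factorials, we have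
`m^(k) / n^(k) ≤ (m/n)^k ≤ 8⁻ᵏ` and `(n-m)^(r-k) ≤ (n-k)^(r-k)`, while `C(r,k) ≤ 2^r ≤ 4^k`;
hence `P(Z = k) ≤ 2⁻ᵏ ≤ 2^(-z/2)`. -/

open MeasureTheory

namespace Nat

theorem pow_mul_descFactorial_le_pow_mul_descFactorial {m n : ℕ} (hmn : m ≤ n) (k : ℕ) :
    n ^ k * m.descFactorial k ≤ m ^ k * n.descFactorial k := by
  induction k with
  | zero => simp
  | succ k ih =>
    have hstep : n * (m - k) ≤ m * (n - k) := by
      rcases le_or_gt k m with hkm | hmk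
      · zify [hkm, hkm.trans hmn]
        nlinarith
      · simp [Nat.sub_eq_zero_of_le hmk.le]
    calc n ^ (k + 1) * m.descFactorial (k + 1)
        = (n * (m - k)) * (n ^ k * m.descFactorial k) := by
          rw [descFactorial_succ, pow_succ]; ring
      _ ≤ (m * (n - k)) * (m ^ k * n.descFactorial k) := Nat.mul_le_mul hstep ih
      _ = m ^ (k + 1) * n.descFactorial (k + 1) := by
          rw [descFactorial_succ, pow_succ]; ring

theorem factorial_mul_choose_mul_choose (a b : ℕ) {k r : ℕ} (hkr : k ≤ r) :
    r ! * (a.choose k * b.choose (r - k)) =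
      r.choose k * (a.descFactorial k * b.descFactorial (r - k)) := by
  rw [descFactorial_eq_factorial_mul_choose, descFactorial_eq_factorial_mul_choose,
    ← choose_mul_factorial_mul_factorial hkr]
  ring

theorem two_pow_mul_choose_mul_choose_le_choose {n m r k : ℕ} (hmn : 8 * m ≤ n) (hkr : k ≤ r)
    (hrk : r ≤ 2 * k) :
    2 ^ k * (m.choose k * (n - m).choose (r - k)) ≤ n.choose r := by
  rcases lt_or_ge m k with hmk | hkm
  · simp [choose_eq_zero_of_lt hmk]
  have hnk : 0 < n ^ k := by
    rcases Nat.eq_zero_or_pos k with rfl | hk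
    · simp
    · exact Nat.pow_pos (by omega)
  have hsplit : n.descFactorial r = (n - k).descFactorial (r - k) * n.descFactorial k :=
    (descFactorial_mul_descFactorial hkr).symm
  refine Nat.le_of_mul_le_mul_left ?_ (Nat.mul_pos hnk (factorial_pos r))
  calc n ^ k * r ! * (2 ^ k * (m.choose k * (n - m).choose (r - k)))
      = 2 ^ k * r.choose k * ((n ^ k * m.descFactorial k) * (n - m).descFactorial (r - k)) := by
        rw [show n ^ k * r ! * (2 ^ k * (m.choose k * (n - m).choose (r - k))) =
            2 ^ k * n ^ k * (r ! * (m.choose k * (n - m).choose (r - k))) by ring,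
          factorial_mul_choose_mul_choose m (n - m) hkr]
        ring
    _ ≤ 2 ^ k * 2 ^ r * ((m ^ k * n.descFactorial k) * (n - k).descFactorial (r - k)) :=
        Nat.mul_le_mul (Nat.mul_le_mul_left _ (choose_le_two_pow r k))
          (Nat.mul_le_mul (pow_mul_descFactorial_le_pow_mul_descFactorial (by omega) k)
            (descFactorial_le _ (by omega)))
    _ = (2 ^ k * 2 ^ r * m ^ k) * n.descFactorial r := by rw [hsplit]; ring
    _ ≤ (2 ^ k * 2 ^ (2 * k) * m ^ k) * n.descFactorial r := by
        gcongr
        norm_num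
    _ = (8 * m) ^ k * n.descFactorial r := by rw [pow_mul, ← mul_pow, ← mul_pow]; norm_num
    _ ≤ n ^ k * n.descFactorial r := by gcongr
    _ = n ^ k * r ! * n.choose r := by rw [descFactorial_eq_factorial_mul_choose]; ring

end Nat

theorem choose_mul_choose_div_choose_le_half_pow {n m r k : ℕ} (hmn : 8 * m ≤ n) (hrn : r ≤ n)
    (hkr : k ≤ r) (hrk : r ≤ 2 * k) :
    (m.choose k * (n - m).choose (r - k) : ℝ) / n.choose r ≤ (1 / 2) ^ k := by
  have hkey : (2 ^ k * (m.choose k * (n - m).choose (r - k)) : ℝ) ≤ n.choose r := by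
    exact_mod_cast Nat.two_pow_mul_choose_mul_choose_le_choose hmn hkr hrk
  rw [div_le_iff₀ (by exact_mod_cast Nat.choose_pos hrn)]
  calc (m.choose k * (n - m).choose (r - k) : ℝ)
      = (1 / 2) ^ k * (2 ^ k * (m.choose k * (n - m).choose (r - k))) := by
        rw [← mul_assoc, ← mul_pow]; norm_num
    _ ≤ (1 / 2) ^ k * n.choose r := by gcongr

theorem progress_prob_le_general {Ω : Type*} [MeasurableSpace Ω]
    (μ : Measure Ω)
    (n m r s : ℕ) (hsm : s ≤ m) (hm : 8 * m ≤ n) (hrn : r ≤ n)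
    (Z : Ω → ℕ)
    (hZ : ∀ z : ℕ, (μ {ω | Z ω = z}).toReal =
      if z ≤ m ∧ z ≤ r then
        (Nat.choose m z * Nat.choose (n - m) (r - z) : ℝ) / Nat.choose n r
      else 0) :
    ∀ z : ℕ, 1 ≤ z →
      (μ {ω | max (2 * (Z ω : ℤ) - r + s - m) 0 = z}).toReal
        ≤ ((1 : ℝ) / 2) ^ ((z : ℝ) / 2) := by
  intro z hz
  have hevent : {ω | max (2 * (Z ω : ℤ) - r + s - m) 0 = z} =
      {ω | 2 * (Z ω : ℤ) = z + r + m - s} := by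
    ext ω; simp only [Set.mem_ofPred_eq, max_eq_iff]; omega
  rw [hevent]
  by_cases hk : ∃ k : ℕ, 2 * (k : ℤ) = z + r + m - s
  · obtain ⟨k, hk⟩ := hk
    have hlevel : {ω | 2 * (Z ω : ℤ) = z + r + m - s} = {ω | Z ω = k} := by
      ext ω; simp only [Set.mem_ofPred_eq]; omega
    rw [hlevel, hZ k]
    split_ifs with hkmr
    · calc _ ≤ ((1 : ℝ) / 2) ^ k := choose_mul_choose_div_choose_le_half_pow hm hrn hkmr.2 (by omega)
        _ ≤ _ := by
          rw [← Real.rpow_natCast]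
          refine Real.rpow_le_rpow_of_exponent_ge (by norm_num) (by norm_num) ?_
          rw [div_le_iff₀ two_pos]
          exact_mod_cast (by omega : z ≤ k * 2)
    · positivity
  · have hempty : {ω | 2 * (Z ω : ℤ) = z + r + m - s} = ∅ :=
      Set.eq_empty_of_forall_notMem fun ω hω => hk ⟨Z ω, hω⟩
    rw [hempty, measure_empty, ENNReal.toReal_zero]
    positivity

/-- Lemma 5 (progress bound): let `Z` be hypergeometric with parameters `n`, `m`, `r`
and `Δ := max{2Z − r + s − m, 0}` where `s ≤ m ≤ n/8` and `1 ≤ r ≤ n`. Then for every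
`z ≥ 1`, `P(Δ = z) ≤ (1/2)^{z/2}`. -/
theorem progress_prob_le {Ω : Type*} [MeasurableSpace Ω]
    (μ : Measure Ω) [IsProbabilityMeasure μ]
    (n m r s : ℕ) (hsm : s ≤ m) (hm : 8 * m ≤ n) (hr1 : 1 ≤ r) (hrn : r ≤ n)
    (Z : Ω → ℕ) (hZmeas : Measurable Z)
    (hZ : ∀ z : ℕ, (μ {ω | Z ω = z}).toReal =
      if z ≤ m ∧ z ≤ r then
        (Nat.choose m z * Nat.choose (n - m) (r - z) : ℝ) / Nat.choose n r
      else 0) :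
    ∀ z : ℕ, 1 ≤ z →
      (μ {ω | max (2 * (Z ω : ℤ) - r + s - m) 0 = z}).toReal
        ≤ ((1 : ℝ) / 2) ^ ((z : ℝ) / 2) :=
  progress_prob_le_general μ n m r s hsm hm hrn Z hZ
end

section
/- Chvátal's hypergeometric tail bound: if Z is hypergeometric with parameters n, m, r, then for every δ ≥ 0, P(Z ≥ rm/n + rδ) ≤ exp(−2δ²r). -/
/-!
Chernoff's method. Writing `x = 1 + u` and expanding `x ^ Z` binomially, the hypergeometric
law has factorial moments `E[C(Z, j)] = C(r, j) C(m, j) / C(n, j) ≤ C(r, j) p ^ j` with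
`p = m / n`, so `E[x ^ Z] ≤ (1 - p + p x) ^ r` for `x ≥ 1`: the generating function of `Z` is
dominated by that of the binomial law `Bin(r, p)`. Hoeffding's lemma for a Bernoulli(`p`)
variable gives `1 - p + p e^t ≤ exp (t p + t² / 8)`, and Markov's inequality for `e^{t Z}`
with `t = 4 δ`, the minimiser of `-t δ + t² / 8`, finishes the proof.
-/

open MeasureTheory ProbabilityTheory Finset Real

theorem Nat.choose_mul_pow_le_choose_mul_pow {m n : ℕ} (hmn : m ≤ n) (j : ℕ) :
    m.choose j * n ^ j ≤ n.choose j * m ^ j := by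
  suffices m.descFactorial j * n ^ j ≤ n.descFactorial j * m ^ j by
    simp only [Nat.descFactorial_eq_factorial_mul_choose, mul_assoc] at this
    exact Nat.le_of_mul_le_mul_left this j.factorial_pos
  induction j with
  | zero => simp
  | succ j ih =>
    rw [Nat.descFactorial_succ, Nat.descFactorial_succ, pow_succ, pow_succ]
    have hstep : (m - j) * n ≤ (n - j) * m := by
      rw [Nat.sub_mul, Nat.sub_mul, mul_comm n m]
      exact Nat.sub_le_sub_left (Nat.mul_le_mul_left j hmn) _
    calc (m - j) * m.descFactorial j * (n ^ j * n)
        = ((m - j) * n) * (m.descFactorial j * n ^ j) := by ring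
      _ ≤ ((n - j) * m) * (n.descFactorial j * m ^ j) := Nat.mul_le_mul hstep ih
      _ = (n - j) * n.descFactorial j * (m ^ j * m) := by ring

theorem Nat.sum_choose_mul_choose_mul_choose {m n r j : ℕ} (hmn : m ≤ n) (hjr : j ≤ r) :
    ∑ z ∈ range (r + 1), m.choose z * (n - m).choose (r - z) * z.choose j
      = m.choose j * (n - j).choose (r - j) := by
  rw [show r + 1 = j + (r - j + 1) by omega, sum_range_add, sum_eq_zero fun z hz => by
    rw [Nat.choose_eq_zero_of_lt (mem_range.mp hz), mul_zero], zero_add]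
  calc ∑ w ∈ range (r - j + 1), m.choose (j + w) * (n - m).choose (r - (j + w)) * (j + w).choose j
      = m.choose j * ∑ w ∈ range (r - j + 1), (m - j).choose w * (n - m).choose (r - j - w) := by
        rw [mul_sum]
        refine sum_congr rfl fun w _ => ?_
        rw [mul_right_comm, Nat.choose_mul (Nat.le_add_right j w), Nat.add_sub_cancel_left,
          Nat.sub_add_eq, mul_assoc]
    _ = m.choose j * (m - j + (n - m)).choose (r - j) := by
        rw [Nat.add_choose_eq, Nat.sum_antidiagonal_eq_sum_range_succ_mk]
    _ = m.choose j * (n - j).choose (r - j) := by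
        rcases le_or_gt j m with hjm | hmj
        · rw [show m - j + (n - m) = n - j by omega]
        · rw [Nat.choose_eq_zero_of_lt hmj, zero_mul, zero_mul]

theorem sum_choose_mul_choose_mul_one_add_pow {R : Type*} [CommSemiring R] {m n r : ℕ}
    (hmn : m ≤ n) (u : R) :
    ∑ z ∈ range (r + 1), (m.choose z * (n - m).choose (r - z) : R) * (1 + u) ^ z
      = ∑ j ∈ range (r + 1), (m.choose j * (n - j).choose (r - j) : R) * u ^ j := by
  have expand : ∀ z ∈ range (r + 1),
      (1 + u) ^ z = ∑ j ∈ range (r + 1), (z.choose j : R) * u ^ j := by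
    intro z hz
    rw [add_comm, add_pow]
    refine sum_subset (range_subset_range.mpr (mem_range.mp hz)) (fun j _ hj => ?_) |>.trans
      (sum_congr rfl fun j _ => by rw [one_pow, mul_one, mul_comm])
    rw [Nat.choose_eq_zero_of_lt (by simpa using hj), Nat.cast_zero, mul_zero]
  rw [sum_congr rfl fun z hz => by rw [expand z hz, mul_sum], sum_comm]
  refine sum_congr rfl fun j hj => ?_
  rw [← Nat.cast_mul, ← Nat.sum_choose_mul_choose_mul_choose hmn
    (Nat.lt_succ_iff.mp (mem_range.mp hj)), Nat.cast_sum, sum_mul]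
  refine sum_congr rfl fun z _ => ?_
  push_cast
  ring

theorem choose_mul_choose_sub_le {m n r j : ℕ} (hn : 0 < n) (hmn : m ≤ n) (hjr : j ≤ r) :
    (m.choose j * (n - j).choose (r - j) : ℝ) ≤ n.choose r * (r.choose j * (m / n) ^ j) := by
  have hmj : (m.choose j : ℝ) ≤ n.choose j * (m / n) ^ j := by
    rw [div_pow, mul_div_assoc', le_div_iff₀ (by positivity)]
    exact_mod_cast Nat.choose_mul_pow_le_choose_mul_pow hmn j
  have hnrj : (n.choose r * r.choose j : ℝ) = n.choose j * (n - j).choose (r - j) := by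
    exact_mod_cast Nat.choose_mul hjr
  calc (m.choose j * (n - j).choose (r - j) : ℝ)
      ≤ n.choose j * (m / n) ^ j * (n - j).choose (r - j) := by gcongr
    _ = n.choose r * (r.choose j * (m / n) ^ j) := by rw [← mul_assoc, hnrj]; ring

-- Because `r - z` truncates, this is not zero for `z > r`; it is only ever summed over `z ≤ r`.
noncomputable def hypergeomMass (n m r z : ℕ) : ℝ :=
  (Nat.choose m z * Nat.choose (n - m) (r - z) : ℝ) / Nat.choose n r

theorem sum_hypergeomMass_mul_pow_le {n m r : ℕ} (hn : 0 < n) (hmn : m ≤ n) (hrn : r ≤ n)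
    {x : ℝ} (hx : 1 ≤ x) :
    ∑ z ∈ range (r + 1), hypergeomMass n m r z * x ^ z ≤ (1 - m / n + m / n * x) ^ r := by
  have hexpand : ∑ z ∈ range (r + 1), hypergeomMass n m r z * x ^ z
      = (∑ j ∈ range (r + 1), (m.choose j * (n - j).choose (r - j) : ℝ) * (x - 1) ^ j)
        / n.choose r := by
    simp only [hypergeomMass, div_mul_eq_mul_div, ← sum_div]
    rw [← sum_choose_mul_choose_mul_one_add_pow hmn, add_sub_cancel]
  have hbinom : (1 - m / n + m / n * x : ℝ) ^ r
      = ∑ j ∈ range (r + 1), r.choose j * (m / n * (x - 1)) ^ j := by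
    rw [show (1 - m / n + m / n * x : ℝ) = m / n * (x - 1) + 1 by ring, add_pow]
    exact sum_congr rfl fun j _ => by rw [one_pow, mul_one, mul_comm]
  rw [hexpand, div_le_iff₀ (by exact_mod_cast Nat.choose_pos hrn), hbinom, sum_mul]
  refine sum_le_sum fun j hj => ?_
  calc (m.choose j * (n - j).choose (r - j) : ℝ) * (x - 1) ^ j
      ≤ n.choose r * (r.choose j * (m / n) ^ j) * (x - 1) ^ j :=
        mul_le_mul_of_nonneg_right
          (choose_mul_choose_sub_le hn hmn (Nat.lt_succ_iff.mp (mem_range.mp hj)))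
          (pow_nonneg (sub_nonneg.mpr hx) j)
    _ = r.choose j * (m / n * (x - 1)) ^ j * n.choose r := by rw [mul_pow]; ring

theorem one_sub_add_mul_exp_le {p : ℝ} (hp₀ : 0 ≤ p) (hp₁ : p ≤ 1) (t : ℝ) :
    1 - p + p * exp t ≤ exp (t * p + t ^ 2 / 8) := by
  set ν : Measure ℝ := bernoulliMeasure 1 0 ⟨p, hp₀, hp₁⟩
  have h_mem : ∀ᵐ x ∂ν, x ∈ Set.Icc (0 : ℝ) 1 := by
    rw [ae_iff]
    exact bernoulliMeasure_apply_of_notMem_of_notMem _ measurableSet_Icc.compl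
      (by simp) (by simp)
  have h_mgf : p * exp (t * (1 - p)) + (1 - p) * exp (t * (0 - p)) ≤ exp (t ^ 2 / 8) := by
    have h := (hasSubgaussianMGF_of_mem_Icc measurable_id.aemeasurable h_mem).mgf_le t
    simp only [mgf, id_eq, integral_bernoulliMeasure, smul_eq_mul, mul_one, mul_zero, add_zero,
      sub_zero, nnnorm_one, ν] at h
    refine h.trans_eq (congrArg exp ?_)
    push_cast
    ring
  calc 1 - p + p * exp t
      = exp (t * p) * (p * exp (t * (1 - p)) + (1 - p) * exp (t * (0 - p))) := by
        rw [mul_add, mul_left_comm, ← exp_add, mul_left_comm, ← exp_add,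
          show t * p + t * (1 - p) = t by ring, show t * p + t * (0 - p) = 0 by ring, exp_zero]
        ring
    _ ≤ exp (t * p) * exp (t ^ 2 / 8) := by gcongr
    _ = exp (t * p + t ^ 2 / 8) := (exp_add _ _).symm

theorem measureReal_preimage_le_sum_filter {Ω : Type*} [MeasurableSpace Ω] {μ : Measure Ω}
    [IsFiniteMeasure μ] {Z : Ω → ℕ} (hZ : Measurable Z) {r : ℕ}
    (hr : ∀ z, r < z → μ (Z ⁻¹' {z}) = 0) (s : Set ℕ) [DecidablePred (· ∈ s)] :
    μ.real (Z ⁻¹' s) ≤ ∑ z ∈ range (r + 1) with z ∈ s, μ.real (Z ⁻¹' {z}) := by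
  have h_tail : μ.real (Z ⁻¹' Set.Ioi r) = 0 := by
    rw [measureReal_def, (measure_preimage_eq_zero_iff_of_countable
      (Set.to_countable (Set.Ioi r))).mpr hr, ENNReal.toReal_zero]
  calc μ.real (Z ⁻¹' s)
      ≤ μ.real (Z ⁻¹' ↑{z ∈ range (r + 1) | z ∈ s} ∪ Z ⁻¹' Set.Ioi r) := by
        refine measureReal_mono fun ω hω => ?_
        by_cases h : Z ω ≤ r
        · left; simpa [Nat.lt_succ_iff] using ⟨h, hω⟩
        · right; simpa using h
    _ ≤ μ.real (Z ⁻¹' ↑{z ∈ range (r + 1) | z ∈ s}) + μ.real (Z ⁻¹' Set.Ioi r) :=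
        measureReal_union_le _ _
    _ = ∑ z ∈ range (r + 1) with z ∈ s, μ.real (Z ⁻¹' {z}) := by
        rw [h_tail, add_zero, sum_measureReal_preimage_singleton]
        exact fun z _ => hZ (measurableSet_singleton z)

theorem sum_filter_le_exp_mul_sum_mul_exp_pow (s : Finset ℕ) {q : ℕ → ℝ}
    (hq : ∀ z ∈ s, 0 ≤ q z) (a : ℝ) {t : ℝ} (ht : 0 ≤ t) :
    ∑ z ∈ s with a ≤ (z : ℕ), q z ≤ exp (-t * a) * ∑ z ∈ s, q z * exp t ^ z := by
  rw [sum_filter, mul_sum]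
  refine sum_le_sum fun z hz => ?_
  have h_exp : exp (-t * a) * (q z * exp t ^ z) = q z * exp (t * (z - a)) := by
    rw [← exp_nat_mul, mul_left_comm, ← exp_add]
    ring_nf
  rw [h_exp]
  split_ifs with h
  · exact le_mul_of_one_le_right (hq z hz) (one_le_exp (by nlinarith))
  · exact mul_nonneg (hq z hz) (exp_pos _).le

/-- Chvátal's hypergeometric tail bound: if `Z` is hypergeometric with parameters
`n`, `m`, `r`, then for every `δ ≥ 0`, `P(Z ≥ rm/n + rδ) ≤ exp(−2δ²r)`. -/
theorem chvatal_tail_bound {Ω : Type*} [MeasurableSpace Ω]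
    (μ : Measure Ω) [IsProbabilityMeasure μ]
    (n m r : ℕ) (hn : 0 < n) (hmn : m ≤ n) (hrn : r ≤ n)
    (Z : Ω → ℕ) (hZmeas : Measurable Z)
    (hZ : ∀ z : ℕ, (μ {ω | Z ω = z}).toReal =
      if z ≤ m ∧ z ≤ r then
        (Nat.choose m z * Nat.choose (n - m) (r - z) : ℝ) / Nat.choose n r
      else 0) :
    ∀ δ : ℝ, 0 ≤ δ →
      (μ {ω | (r : ℝ) * m / n + r * δ ≤ (Z ω : ℝ)}).toReal
        ≤ Real.exp (-2 * δ ^ 2 * r) := by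
  intro δ hδ
  have h_tail : ∀ z, r < z → μ (Z ⁻¹' {z}) = 0 := fun z hz => by
    have h := hZ z
    rw [if_neg (by omega)] at h
    exact (measureReal_eq_zero_iff).mp h
  have h_mass : ∀ z ∈ range (r + 1), μ.real (Z ⁻¹' {z}) = hypergeomMass n m r z := by
    intro z hz
    refine (hZ z).trans ?_
    split_ifs with h
    · rfl
    · have hmz : m < z := by have := mem_range.mp hz; omega
      simp [hypergeomMass, Nat.choose_eq_zero_of_lt hmz]
  set t := 4 * δ
  set a := (r : ℝ) * m / n + r * δ
  have hp₁ : (m : ℝ) / n ≤ 1 := div_le_one_of_le₀ (by exact_mod_cast hmn) n.cast_nonneg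
  calc (μ {ω | a ≤ (Z ω : ℝ)}).toReal
      ≤ ∑ z ∈ range (r + 1) with a ≤ (z : ℕ), μ.real (Z ⁻¹' {z}) :=
        measureReal_preimage_le_sum_filter hZmeas h_tail {z : ℕ | a ≤ z}
    _ = ∑ z ∈ range (r + 1) with a ≤ (z : ℕ), hypergeomMass n m r z :=
        sum_congr rfl fun z hz => h_mass z (mem_filter.mp hz).1
    _ ≤ exp (-t * a) * ∑ z ∈ range (r + 1), hypergeomMass n m r z * exp t ^ z :=
        sum_filter_le_exp_mul_sum_mul_exp_pow _ (fun z _ => by unfold hypergeomMass; positivity)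
          a (by positivity)
    _ ≤ exp (-t * a) * (1 - m / n + m / n * exp t) ^ r := by
        gcongr
        exact sum_hypergeomMass_mul_pow_le hn hmn hrn (one_le_exp (by positivity))
    _ ≤ exp (-t * a) * exp (t * (m / n) + t ^ 2 / 8) ^ r := by
        gcongr
        exact one_sub_add_mul_exp_le (by positivity) hp₁ t
    _ = exp (-2 * δ ^ 2 * r) := by
        rw [← exp_nat_mul, ← exp_add]
        congr 1
        simp only [t, a]
        ring
end
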